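/- Under the hypotheses of the Laplacian pyramids stability bound (each P_ℓ row-stochastic, ‖I - P_j‖_∞ ≤ 1/2 for j ≥ m), the extended function f_ℓ(x) = Σ_{k=0}^{ℓ} Σ_{j=1}^n P_k(x, x_j) (D_k f)_j satisfies ‖f_ℓ‖_∞ ≤ 3 · 2^m ‖f‖_∞ for all x, where each out-of-sample kernel satisfies Σ_j P_k(x, x_j) = 1 and P_k(x, x_j) ≥ 0. -/
import Mathlib


/-- The ℓ∞ operator norm (maximum absolute row sum) of an `n × n` real matrix. -/
noncomputable def inftyNorm {n : ℕ} (hn : 0 < n) (M : Matrix (Fin n) (Fin n) ℝ) : ℝ :=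
  Finset.univ.sup' (Finset.univ_nonempty_iff.mpr ⟨⟨0, hn⟩⟩) fun i => ∑ j, |M i j|

/-- The residual operators built from the in-sample kernel matrices. -/
noncomputable def lpD {n : ℕ} (Pbar : ℕ → Matrix (Fin n) (Fin n) ℝ) :
    ℕ → Matrix (Fin n) (Fin n) ℝ
  | 0 => 1
  | (k+1) => (1 - Pbar k) * lpD Pbar k

lemma mulVec_norm_le {n : ℕ} (hn : 0 < n) (M : Matrix (Fin n) (Fin n) ℝ)
    (v : Fin n → ℝ) : ‖M.mulVec v‖ ≤ inftyNorm hn M * ‖v‖ := by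
  have hNn : (0:ℝ) ≤ inftyNorm hn M := by
    have h := Finset.le_sup' (fun i => ∑ j, |M i j|) (Finset.mem_univ (⟨0, hn⟩ : Fin n))
    refine le_trans ?_ h
    exact Finset.sum_nonneg fun j _ => abs_nonneg _
  have hN : (0:ℝ) ≤ inftyNorm hn M * ‖v‖ := mul_nonneg hNn (norm_nonneg _)
  rw [pi_norm_le_iff_of_nonneg hN]
  intro i
  rw [Real.norm_eq_abs]
  calc |M.mulVec v i| = |∑ j, M i j * v j| := by
        simp [Matrix.mulVec, dotProduct]
    _ ≤ ∑ j, |M i j * v j| := Finset.abs_sum_le_sum_abs _ _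
    _ ≤ ∑ j, |M i j| * ‖v‖ := by
        apply Finset.sum_le_sum
        intro j _
        rw [abs_mul]
        exact mul_le_mul_of_nonneg_left (by simpa using norm_le_pi_norm v j) (abs_nonneg _)
    _ = (∑ j, |M i j|) * ‖v‖ := by rw [Finset.sum_mul]
    _ ≤ inftyNorm hn M * ‖v‖ := by
        apply mul_le_mul_of_nonneg_right _ (norm_nonneg _)
        exact Finset.le_sup' (fun i => ∑ j, |M i j|) (Finset.mem_univ i)

/-- Stability of the extended function: with in-sample kernels `Pbar_k` row-stochastic,
`‖I - Pbar_j‖_∞ ≤ 1/2` for `j ≥ m`, and out-of-sample averaging weights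
`P k x ·` nonnegative and summing to `1`, the extension
`f_ℓ(x) = Σ_{k=0}^ℓ Σ_j P_k(x, x_j) (D_k f)_j` satisfies `|f_ℓ(x)| ≤ 3 · 2^m ‖f‖_∞`. -/
theorem stmt8 {n : ℕ} (hn : 0 < n) {X : Type*}
    (Pbar : ℕ → Matrix (Fin n) (Fin n) ℝ)
    (hnn : ∀ k i j, 0 ≤ Pbar k i j) (hrow : ∀ k i, ∑ j, Pbar k i j = 1)
    (m : ℕ) (hcontract : ∀ j ≥ m, inftyNorm hn (1 - Pbar j) ≤ 1 / 2)
    (P : ℕ → X → Fin n → ℝ)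
    (hPnn : ∀ k x j, 0 ≤ P k x j) (hPsum : ∀ k x, ∑ j, P k x j = 1)
    (f : Fin n → ℝ) (ℓ : ℕ) (x : X) :
    |∑ k ∈ Finset.range (ℓ + 1), ∑ j, P k x j * (lpD Pbar k).mulVec f j| ≤
      3 * 2 ^ m * ‖f‖ := by
  set g : ℕ → ℝ := fun k => ‖(lpD Pbar k).mulVec f‖ with hg
  have hg0 : g 0 = ‖f‖ := by simp [hg, lpD]
  have hgnn : ∀ k, 0 ≤ g k := fun k => norm_nonneg _
  -- ‖I - Pbar k‖ ≤ 2
  have htwo : ∀ k, inftyNorm hn (1 - Pbar k) ≤ 2 := by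
    intro k
    apply Finset.sup'_le
    intro i _
    calc ∑ j, |(1 - Pbar k) i j| ≤ ∑ j, (((1:Matrix (Fin n) (Fin n) ℝ) i j) + Pbar k i j) := by
          apply Finset.sum_le_sum
          intro j _
          rw [Matrix.sub_apply]
          refine le_trans (abs_sub _ _) ?_
          rw [abs_of_nonneg (by simp [Matrix.one_apply]; positivity),
            abs_of_nonneg (hnn k i j)]
      _ = 2 := by
          rw [Finset.sum_add_distrib, hrow k i]
          simp [Matrix.one_apply]
          norm_num
  have hstep : ∀ k, g (k + 1) ≤ inftyNorm hn (1 - Pbar k) * g k := by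
    intro k
    have : (lpD Pbar (k+1)).mulVec f = (1 - Pbar k).mulVec ((lpD Pbar k).mulVec f) := by
      simp [lpD, Matrix.mulVec_mulVec]
    rw [hg]
    simp only [this]
    exact mulVec_norm_le hn _ _
  have hb1 : ∀ k, g k ≤ 2 ^ k * ‖f‖ := by
    intro k
    induction k with
    | zero => simp [hg0]
    | succ k ih =>
        calc g (k+1) ≤ inftyNorm hn (1 - Pbar k) * g k := hstep k
          _ ≤ 2 * (2 ^ k * ‖f‖) := by
              apply mul_le_mul (htwo k) ih (hgnn k)
              norm_num
          _ = 2 ^ (k+1) * ‖f‖ := by ring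
  have hb2 : ∀ i, g (m + i) ≤ (1/2) ^ i * (2 ^ m * ‖f‖) := by
    intro i
    induction i with
    | zero => simpa using hb1 m
    | succ i ih =>
        have : m + (i + 1) = (m + i) + 1 := by ring
        rw [this]
        calc g ((m+i)+1) ≤ inftyNorm hn (1 - Pbar (m+i)) * g (m+i) := hstep _
          _ ≤ (1/2) * ((1/2)^i * (2^m * ‖f‖)) := by
              apply mul_le_mul (hcontract _ (Nat.le_add_right m i)) ih (hgnn _)
              norm_num
          _ = (1/2) ^ (i+1) * (2 ^ m * ‖f‖) := by ring
  have hterm : ∀ k, |∑ j, P k x j * (lpD Pbar k).mulVec f j| ≤ g k := by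
    intro k
    calc |∑ j, P k x j * (lpD Pbar k).mulVec f j|
        ≤ ∑ j, |P k x j * (lpD Pbar k).mulVec f j| := Finset.abs_sum_le_sum_abs _ _
      _ ≤ ∑ j, P k x j * g k := by
          apply Finset.sum_le_sum
          intro j _
          rw [abs_mul, abs_of_nonneg (hPnn k x j)]
          apply mul_le_mul_of_nonneg_left _ (hPnn k x j)
          simpa [hg] using norm_le_pi_norm ((lpD Pbar k).mulVec f) j
      _ = g k := by rw [← Finset.sum_mul, hPsum k x, one_mul]
  calc |∑ k ∈ Finset.range (ℓ + 1), ∑ j, P k x j * (lpD Pbar k).mulVec f j|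
      ≤ ∑ k ∈ Finset.range (ℓ + 1), |∑ j, P k x j * (lpD Pbar k).mulVec f j| :=
        Finset.abs_sum_le_sum_abs _ _
    _ ≤ ∑ k ∈ Finset.range (ℓ + 1), g k := Finset.sum_le_sum fun k _ => hterm k
    _ ≤ 3 * 2 ^ m * ‖f‖ := by
        rw [← Finset.sum_filter_add_sum_filter_not (Finset.range (ℓ+1)) (fun k => k < m)]
        have h1 : ∑ k ∈ (Finset.range (ℓ+1)).filter (fun k => k < m), g k
            ≤ (2 ^ m - 1) * ‖f‖ := by
          calc ∑ k ∈ (Finset.range (ℓ+1)).filter (fun k => k < m), g k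
              ≤ ∑ k ∈ (Finset.range (ℓ+1)).filter (fun k => k < m), 2 ^ k * ‖f‖ :=
                Finset.sum_le_sum fun k _ => hb1 k
            _ ≤ ∑ k ∈ Finset.range m, 2 ^ k * ‖f‖ := by
                apply Finset.sum_le_sum_of_subset_of_nonneg
                · intro k hk
                  simp only [Finset.mem_filter, Finset.mem_range] at hk ⊢
                  exact hk.2
                · intro k _ _
                  positivity
            _ = (2 ^ m - 1) * ‖f‖ := by
                rw [← Finset.sum_mul]
                congr 1
                have := geom_sum_eq (by norm_num : (2:ℝ) ≠ 1) m
                rw [this]; norm_num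
        have h2 : ∑ k ∈ (Finset.range (ℓ+1)).filter (fun k => ¬ k < m), g k
            ≤ 2 * (2 ^ m * ‖f‖) := by
          calc ∑ k ∈ (Finset.range (ℓ+1)).filter (fun k => ¬ k < m), g k
              ≤ ∑ k ∈ Finset.Ico m (ℓ+1+m), g k := by
                apply Finset.sum_le_sum_of_subset_of_nonneg
                · intro k hk
                  simp only [Finset.mem_filter, Finset.mem_range, not_lt] at hk
                  simp only [Finset.mem_Ico]
                  exact ⟨hk.2, by omega⟩
                · intro k _ _; exact hgnn k
            _ = ∑ i ∈ Finset.range (ℓ+1), g (m + i) := by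
                rw [Finset.sum_Ico_eq_sum_range]
                simp [add_comm]
            _ ≤ ∑ i ∈ Finset.range (ℓ+1), (1/2)^i * (2 ^ m * ‖f‖) :=
                Finset.sum_le_sum fun i _ => hb2 i
            _ = (∑ i ∈ Finset.range (ℓ+1), (1/2:ℝ)^i) * (2 ^ m * ‖f‖) := by
                rw [Finset.sum_mul]
            _ ≤ 2 * (2 ^ m * ‖f‖) := by
                apply mul_le_mul_of_nonneg_right (sum_geometric_two_le _)
                positivity
        have hfnn : (0:ℝ) ≤ ‖f‖ := norm_nonneg f
        nlinarith [pow_pos (by norm_num : (0:ℝ) < 2) m]
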